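/- arXiv:2103.07924 — 4 statements merged into one kernel-verified Lean document; each statement's English description precedes it below -/
import Mathlib

section
/- The function f₃(x) = x·√(x² + 4) − (x − 2)·√((x − 2)² + 4) is strictly increasing for x > 2. -/
/-! Writing `g t = t * √(t² + 4)`, the function is `g x - g (x - 2)`, with derivative
`g' x - g' (x - 2)`. Since `g' t = 2√(t² + 4) - 4 / √(t² + 4)` is strictly increasing for `t ≥ 0`,
this derivative is positive for `x > 2`. -/

open Set

lemma strictMonoOn_sub_comp_sub_of_deriv {g g' : ℝ → ℝ} {d : ℝ} (hd : 0 < d)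
    (hg : ∀ t, HasDerivAt g (g' t) t) (hg' : StrictMonoOn g' (Ici 0)) :
    StrictMonoOn (fun x => g x - g (x - d)) (Ioi d) := by
  have hderiv : ∀ x, HasDerivAt (fun x => g x - g (x - d)) (g' x - g' (x - d)) x := fun x =>
    (hg x).sub (by simpa using (hg (x - d)).comp_sub_const x d)
  refine strictMonoOn_of_deriv_pos (convex_Ioi d)
    (fun x _ => (hderiv x).continuousAt.continuousWithinAt) fun x hx => ?_
  rw [interior_Ioi, mem_Ioi] at hx
  rw [(hderiv x).deriv, sub_pos]
  exact hg' (mem_Ici.2 (by linarith)) (mem_Ici.2 (by linarith)) (by linarith)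

section MulSqrt

variable {a : ℝ}

lemma hasDerivAt_mul_sqrt_sq_add (ha : 0 < a) (t : ℝ) :
    HasDerivAt (fun t => t * √(t ^ 2 + a)) (2 * √(t ^ 2 + a) - a / √(t ^ 2 + a)) t := by
  have hpos : 0 < t ^ 2 + a := by positivity
  have hsqrt : HasDerivAt (fun t => √(t ^ 2 + a)) (1 / (2 * √(t ^ 2 + a)) * (2 * t)) t :=
    (Real.hasDerivAt_sqrt hpos.ne').comp t (by simpa using (hasDerivAt_pow 2 t).add_const a)
  refine ((hasDerivAt_id t).mul hsqrt).congr_deriv ?_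
  have hs : 0 < √(t ^ 2 + a) := Real.sqrt_pos.2 hpos
  field_simp
  rw [Real.sq_sqrt hpos.le]
  simp only [id]
  ring

lemma strictMonoOn_two_mul_sqrt_sq_add_sub_div (ha : 0 < a) :
    StrictMonoOn (fun t => 2 * √(t ^ 2 + a) - a / √(t ^ 2 + a)) (Ici 0) := by
  intro s hs t ht hst
  have hsqrt : √(s ^ 2 + a) < √(t ^ 2 + a) :=
    Real.sqrt_lt_sqrt (by positivity) (by gcongr)
  have hdiv : a / √(t ^ 2 + a) ≤ a / √(s ^ 2 + a) :=
    div_le_div_of_nonneg_left ha.le (Real.sqrt_pos.2 (by positivity)) hsqrt.le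
  dsimp only
  linarith

end MulSqrt

theorem f3_strictMonoOn :
    StrictMonoOn (fun x : ℝ =>
        x * Real.sqrt (x^2 + 4) - (x - 2) * Real.sqrt ((x - 2)^2 + 4))
      (Set.Ioi (2 : ℝ)) :=
  strictMonoOn_sub_comp_sub_of_deriv two_pos (hasDerivAt_mul_sqrt_sq_add four_pos)
    (strictMonoOn_two_mul_sqrt_sq_add_sub_div four_pos)
end

section
/- If T is a tree on n ≥ 2 vertices, then its Sombor index satisfies SO(T) ≤ (n−1)·√((n−1)² + 1), with equality if and only if T is the star K_{1,n−1}. -/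
attribute [local instance] Classical.propDecidable

/-- The Sombor index of a finite simple graph:
`SO(G) = Σ_{uv ∈ E(G)} √(d(u)² + d(v)²)`, written as half the sum over ordered adjacent pairs. -/
noncomputable def somborIndex {V : Type*} [Fintype V] (G : SimpleGraph V) : ℝ :=
  (∑ u : V, ∑ v : V,
      if G.Adj u v then Real.sqrt ((G.degree u : ℝ)^2 + (G.degree v : ℝ)^2) else 0) / 2

/-- A cactus: a connected graph in which any two distinct cycles share at most one vertex. -/
def IsCactus {V : Type*} (G : SimpleGraph V) : Prop :=
  G.Connected ∧ ∀ (u v : V) (c₁ : G.Walk u u) (c₂ : G.Walk v v),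
    c₁.IsCycle → c₂.IsCycle → c₁.edges.toFinset ≠ c₂.edges.toFinset →
      (c₁.support.toFinset ∩ c₂.support.toFinset).card ≤ 1

/-- `Hgraph n t` : the cactus obtained from the star `K_{1,n-1}` (center `0`) by joining the
`t` disjoint pairs of pendant vertices `(2k+1, 2k+2)`, `k < t`, by edges. -/
def Hgraph (n t : ℕ) : SimpleGraph (Fin n) :=
  SimpleGraph.fromRel (fun u v =>
    u.val = 0 ∨ ∃ k, k < t ∧ u.val = 2 * k + 1 ∧ v.val = 2 * k + 2)

/-- `HstarGraph β t` : the cactus on `2β` vertices with a perfect matching: a center `0` of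
degree `β + t` adjacent to `1, …, β + t`; `t` triangles through the center formed by the edges
`(2k+1, 2k+2)`, `k < t`; vertex `β + t` is a pendant vertex at the center; and each vertex
`2t + j` (`1 ≤ j ≤ β - t - 1`) carries the pendant vertex `β + t + j`. -/
def HstarGraph (β t : ℕ) : SimpleGraph (Fin (2 * β)) :=
  SimpleGraph.fromRel (fun u v =>
    (u.val = 0 ∧ 1 ≤ v.val ∧ v.val ≤ β + t) ∨
    (∃ k, k < t ∧ u.val = 2 * k + 1 ∧ v.val = 2 * k + 2) ∨
    (∃ j, 1 ≤ j ∧ j ≤ β - t - 1 ∧ u.val = 2 * t + j ∧ v.val = β + t + j))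

open Finset

/-- A tree has no triangles. -/
lemma tree_no_triangle {V : Type*} {T : SimpleGraph V} (hT : T.IsTree) {u v w : V}
    (huv : T.Adj u v) (huw : T.Adj u w) (hwv : T.Adj w v) : False := by
  have hpath := (SimpleGraph.isAcyclic_iff_path_unique).mp hT.IsAcyclic
  have hne1 : u ≠ v := huv.ne
  have hne2 : u ≠ w := huw.ne
  have hne3 : w ≠ v := hwv.ne
  let p1 : T.Walk u v := SimpleGraph.Walk.cons huv SimpleGraph.Walk.nil
  let p2 : T.Walk u v := SimpleGraph.Walk.cons huw (SimpleGraph.Walk.cons hwv SimpleGraph.Walk.nil)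
  have hp1 : p1.IsPath := by
    simp [p1, SimpleGraph.Walk.isPath_def, hne1]
  have hp2 : p2.IsPath := by
    simp [p2, SimpleGraph.Walk.isPath_def, hne1, hne2, hne3]
  have := hpath ⟨p1, hp1⟩ ⟨p2, hp2⟩
  have hval : p1 = p2 := congrArg Subtype.val this
  have := congrArg SimpleGraph.Walk.length hval
  simp [p1, p2] at this

lemma deg_sum_le {V : Type*} [Fintype V] {T : SimpleGraph V} (hT : T.IsTree) {u v : V}
    (huv : T.Adj u v) : T.degree u + T.degree v ≤ Fintype.card V := by
  classical
  have hdisj : Disjoint (T.neighborFinset u) (T.neighborFinset v) := by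
    rw [Finset.disjoint_left]
    intro w hwu hwv
    rw [SimpleGraph.mem_neighborFinset] at hwu hwv
    exact tree_no_triangle hT huv hwu hwv.symm
  calc T.degree u + T.degree v
      = (T.neighborFinset u ∪ T.neighborFinset v).card := by
        rw [Finset.card_union_of_disjoint hdisj]; rfl
    _ ≤ Fintype.card V := by
        simpa using Finset.card_le_univ (T.neighborFinset u ∪ T.neighborFinset v)

lemma key_ineq {a b n : ℝ} (ha : 1 ≤ a) (hb : 1 ≤ b) (hab : a + b ≤ n) :
    a ^ 2 + b ^ 2 ≤ (n - 1) ^ 2 + 1 := by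
  nlinarith [mul_nonneg (sub_nonneg.2 ha) (sub_nonneg.2 hb),
    mul_nonneg (sub_nonneg.2 hab) (by linarith : (0:ℝ) ≤ n + a + b - 2)]

lemma key_eq {a b n : ℝ} (ha : 1 ≤ a) (hb : 1 ≤ b) (hab : a + b ≤ n)
    (h : a ^ 2 + b ^ 2 = (n - 1) ^ 2 + 1) : a = n - 1 ∨ b = n - 1 := by
  have hx : 0 ≤ (a - 1) * (b - 1) := mul_nonneg (by linarith) (by linarith)
  have hy : 0 ≤ (n - a - b) * (n + a + b - 2) :=
    mul_nonneg (by linarith) (by linarith)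
  have h1 : (a - 1) * (b - 1) = 0 := by nlinarith
  have h2 : (n - a - b) * (n + a + b - 2) = 0 := by nlinarith
  have hs : a + b = n := by
    rcases mul_eq_zero.1 h2 with h' | h'
    · linarith
    · linarith
  rcases mul_eq_zero.1 h1 with h' | h'
  · right; have : a = 1 := by linarith
    linarith
  · left; have : b = 1 := by linarith
    linarith

theorem tree_sombor_le {V : Type*} [Fintype V] (T : SimpleGraph V) (n : ℕ)
    (hn : 2 ≤ n) (hcard : Fintype.card V = n) (hT : T.IsTree) :
    somborIndex T ≤ ((n : ℝ) - 1) * Real.sqrt (((n : ℝ) - 1)^2 + 1) ∧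
    (somborIndex T = ((n : ℝ) - 1) * Real.sqrt (((n : ℝ) - 1)^2 + 1) ↔
      Nonempty (T ≃g Hgraph n 0)) := by
  classical
  set C : ℝ := Real.sqrt (((n : ℝ) - 1) ^ 2 + 1) with hC
  have hC0 : 0 ≤ C := Real.sqrt_nonneg _
  -- degrees of adjacent vertices
  have hdeg1 : ∀ {u v : V}, T.Adj u v → 1 ≤ (T.degree u : ℝ) := by
    intro u v huv
    have : 0 < T.degree u := (SimpleGraph.degree_pos_iff_exists_adj T u).2 ⟨v, huv⟩
    exact_mod_cast this
  have hsumle : ∀ {u v : V}, T.Adj u v →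
      (T.degree u : ℝ) + (T.degree v : ℝ) ≤ (n : ℝ) := by
    intro u v huv
    have := deg_sum_le hT huv
    rw [hcard] at this
    exact_mod_cast this
  -- termwise bound
  have hterm : ∀ u v : V,
      (if T.Adj u v then Real.sqrt ((T.degree u : ℝ)^2 + (T.degree v : ℝ)^2) else 0)
      ≤ (if T.Adj u v then C else 0) := by
    intro u v
    by_cases h : T.Adj u v
    · simp only [h, if_true]
      exact Real.sqrt_le_sqrt (key_ineq (hdeg1 h) (hdeg1 h.symm) (hsumle h))
    · simp [h]
  -- number of edges
  have hedges : T.edgeFinset.card = n - 1 := by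
    have := hT.card_edgeFinset
    omega
  -- sum of the bound
  have hrhs : ∑ u : V, ∑ v : V, (if T.Adj u v then C else 0) = 2 * ((n : ℝ) - 1) * C := by
    have h1 : ∀ u : V, ∑ v : V, (if T.Adj u v then C else 0) = (T.degree u : ℝ) * C := by
      intro u
      rw [Finset.sum_ite, Finset.sum_const_zero, add_zero, Finset.sum_const]
      rw [SimpleGraph.degree, SimpleGraph.neighborFinset_eq_filter]
      norm_num
    rw [Finset.sum_congr rfl fun u _ => h1 u, ← Finset.sum_mul]
    have h2 : ∑ u : V, (T.degree u : ℝ) = 2 * ((n : ℝ) - 1) := by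
      have h3 : ∑ v : V, T.degree v = 2 * (n - 1) := by
        rw [T.sum_degrees_eq_twice_card_edges, hedges]
      have h4 : ((∑ v : V, T.degree v : ℕ) : ℝ) = ((2 * (n - 1) : ℕ) : ℝ) := by
        exact_mod_cast h3
      rw [Nat.cast_sum] at h4
      rw [h4]
      push_cast [Nat.cast_sub (by omega : (1:ℕ) ≤ n)]
      ring
    rw [h2]
  have hSle : (∑ u : V, ∑ v : V,
      (if T.Adj u v then Real.sqrt ((T.degree u : ℝ)^2 + (T.degree v : ℝ)^2) else 0))
      ≤ 2 * ((n : ℝ) - 1) * C := by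
    rw [← hrhs]
    exact Finset.sum_le_sum fun u _ => Finset.sum_le_sum fun v _ => hterm u v
  have hineq : somborIndex T ≤ ((n : ℝ) - 1) * C := by
    rw [somborIndex]
    linarith
  refine ⟨hineq, ?_, ?_⟩
  · -- equality implies star
    intro heq
    have hStot : (∑ u : V, ∑ v : V,
        (if T.Adj u v then Real.sqrt ((T.degree u : ℝ)^2 + (T.degree v : ℝ)^2) else 0))
        = 2 * ((n : ℝ) - 1) * C := by
      rw [somborIndex] at heq
      linarith
    -- termwise equality via the flattened sum
    have hflat : ∀ u v : V, T.Adj u v →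
        Real.sqrt ((T.degree u : ℝ)^2 + (T.degree v : ℝ)^2) = C := by
      have hkey : ∀ p ∈ (Finset.univ : Finset (V × V)),
          (if T.Adj p.1 p.2 then Real.sqrt ((T.degree p.1 : ℝ)^2 + (T.degree p.2 : ℝ)^2) else 0)
          = (if T.Adj p.1 p.2 then C else 0) := by
        rw [← Finset.sum_eq_sum_iff_of_le fun p _ => hterm p.1 p.2]
        rw [Fintype.sum_prod_type, Fintype.sum_prod_type]
        rw [hStot, hrhs]
      intro u v huv
      have := hkey (u, v) (Finset.mem_univ _)
      simpa [huv] using this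
    -- every edge has an endpoint of degree n - 1
    have hend : ∀ {u v : V}, T.Adj u v → T.degree u = n - 1 ∨ T.degree v = n - 1 := by
      intro u v huv
      have hs := hflat u v huv
      have hsq : (T.degree u : ℝ)^2 + (T.degree v : ℝ)^2 = ((n:ℝ) - 1)^2 + 1 := by
        have h1 : 0 ≤ (T.degree u : ℝ)^2 + (T.degree v : ℝ)^2 := by positivity
        have h2 : 0 ≤ ((n:ℝ) - 1)^2 + 1 := by positivity
        have := congrArg (fun x => x ^ 2) hs
        simpa [Real.sq_sqrt h1, Real.sq_sqrt h2, hC] using this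
      have := key_eq (hdeg1 huv) (hdeg1 huv.symm) (hsumle huv) hsq
      have hcast : ((n - 1 : ℕ) : ℝ) = (n : ℝ) - 1 := by
        push_cast [Nat.cast_sub (by omega : (1:ℕ) ≤ n)]; ring
      rcases this with h | h
      · left; exact_mod_cast h.trans hcast.symm
      · right; exact_mod_cast h.trans hcast.symm
    -- find a center
    have hedge : ∃ u v : V, T.Adj u v := by
      have hpos : 0 < T.edgeFinset.card := by omega
      obtain ⟨e, he⟩ := Finset.card_pos.mp hpos
      rw [SimpleGraph.mem_edgeFinset] at he
      induction e with
      | h u v => exact ⟨u, v, he⟩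
    obtain ⟨u0, v0, huv0⟩ := hedge
    have hc : ∃ c : V, T.degree c = n - 1 := by
      rcases hend huv0 with h | h
      · exact ⟨u0, h⟩
      · exact ⟨v0, h⟩
    obtain ⟨c, hc⟩ := hc
    -- c is adjacent to everything else
    have hadjc : ∀ v : V, v ≠ c → T.Adj c v := by
      have hsub : T.neighborFinset c ⊆ Finset.univ.erase c := by
        intro w hw
        rw [SimpleGraph.mem_neighborFinset] at hw
        exact Finset.mem_erase.2 ⟨hw.ne.symm, Finset.mem_univ _⟩
      have hcards : (Finset.univ.erase c).card ≤ (T.neighborFinset c).card := by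
        rw [Finset.card_erase_of_mem (Finset.mem_univ c), Finset.card_univ, hcard]
        rw [SimpleGraph.card_neighborFinset_eq_degree, hc]
      have := Finset.eq_of_subset_of_card_le hsub hcards
      intro v hv
      have : v ∈ T.neighborFinset c := by
        rw [this]
        exact Finset.mem_erase.2 ⟨hv, Finset.mem_univ _⟩
      rwa [SimpleGraph.mem_neighborFinset] at this
    -- star characterization
    have hstar : ∀ u v : V, T.Adj u v ↔ u ≠ v ∧ (u = c ∨ v = c) := by
      intro u v
      constructor
      · intro huv
        refine ⟨huv.ne, ?_⟩
        by_contra hcon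
        push_neg at hcon
        exact tree_no_triangle hT (hadjc v hcon.2) (hadjc u hcon.1) huv
      · rintro ⟨hne, h | h⟩
        · subst h; exact hadjc v (Ne.symm hne)
        · subst h; exact (hadjc u hne).symm
    -- build the isomorphism
    have : NeZero n := ⟨by omega⟩
    let e0 : V ≃ Fin n := Fintype.equivFinOfCardEq hcard
    let e : V ≃ Fin n := e0.trans (Equiv.swap (e0 c) 0)
    have hec : e c = 0 := by simp [e, Equiv.swap_apply_left]
    have he0 : ∀ u : V, e u = 0 ↔ u = c := by
      intro u
      rw [← hec]
      exact ⟨fun h => e.injective h, fun h => by rw [h]⟩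
    refine ⟨⟨e, ?_⟩⟩
    intro u v
    show (Hgraph n 0).Adj (e u) (e v) ↔ T.Adj u v
    simp only [Hgraph, SimpleGraph.fromRel_adj]
    rw [hstar u v]
    have hval : ∀ x : Fin n, x.val = 0 ↔ x = 0 := by
      intro x; rw [Fin.ext_iff]; simp
    constructor
    · rintro ⟨hne, h | h⟩
      · rcases h with h | ⟨k, hk, _⟩
        · exact ⟨fun hh => hne (by rw [hh]), Or.inl ((he0 u).1 ((hval _).1 h))⟩
        · omega
      · rcases h with h | ⟨k, hk, _⟩
        · exact ⟨fun hh => hne (by rw [hh]), Or.inr ((he0 v).1 ((hval _).1 h))⟩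
        · omega
    · rintro ⟨hne, h | h⟩
      · exact ⟨fun hh => hne (e.injective hh),
          Or.inl (Or.inl ((hval _).2 ((he0 u).2 h)))⟩
      · exact ⟨fun hh => hne (e.injective hh),
          Or.inr (Or.inl ((hval _).2 ((he0 v).2 h)))⟩
  · -- star implies equality
    rintro ⟨f⟩
    have : NeZero n := ⟨by omega⟩
    set c : V := f.symm 0 with hcdef
    have hstar : ∀ u v : V, T.Adj u v ↔ u ≠ v ∧ (u = c ∨ v = c) := by
      intro u v
      have hval : ∀ x : Fin n, x.val = 0 ↔ x = 0 := by
        intro x; rw [Fin.ext_iff]; simp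
      have hf0 : ∀ u : V, f u = 0 ↔ u = c := by
        intro u
        constructor
        · intro h; rw [hcdef, ← h]; simp
        · intro h; rw [h, hcdef]; simp
      rw [← f.map_adj_iff]
      simp only [Hgraph, SimpleGraph.fromRel_adj]
      constructor
      · rintro ⟨hne, h | h⟩
        · rcases h with h | ⟨k, hk, _⟩
          · exact ⟨fun hh => hne (by rw [hh]), Or.inl ((hf0 u).1 ((hval _).1 h))⟩
          · omega
        · rcases h with h | ⟨k, hk, _⟩
          · exact ⟨fun hh => hne (by rw [hh]), Or.inr ((hf0 v).1 ((hval _).1 h))⟩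
          · omega
      · rintro ⟨hne, h | h⟩
        · exact ⟨fun hh => hne (f.toEquiv.injective hh),
            Or.inl (Or.inl ((hval _).2 ((hf0 u).2 h)))⟩
        · exact ⟨fun hh => hne (f.toEquiv.injective hh),
            Or.inr (Or.inl ((hval _).2 ((hf0 v).2 h)))⟩
    -- degrees in the star
    have hdegc : T.degree c = n - 1 := by
      rw [← SimpleGraph.card_neighborFinset_eq_degree]
      have : T.neighborFinset c = Finset.univ.erase c := by
        ext w
        rw [SimpleGraph.mem_neighborFinset, hstar, Finset.mem_erase]
        constructor
        · rintro ⟨hne, _⟩; exact ⟨Ne.symm hne, Finset.mem_univ _⟩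
        · rintro ⟨hne, _⟩; exact ⟨Ne.symm hne, Or.inl rfl⟩
      rw [this, Finset.card_erase_of_mem (Finset.mem_univ c), Finset.card_univ, hcard]
    have hdegp : ∀ u : V, u ≠ c → T.degree u = 1 := by
      intro u hu
      rw [← SimpleGraph.card_neighborFinset_eq_degree]
      have : T.neighborFinset u = {c} := by
        ext w
        rw [SimpleGraph.mem_neighborFinset, hstar, Finset.mem_singleton]
        constructor
        · rintro ⟨hne, h | h⟩
          · exact absurd h hu
          · exact h
        · rintro rfl
          exact ⟨hu, Or.inr rfl⟩
      rw [this, Finset.card_singleton]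
    have hcast : ((n - 1 : ℕ) : ℝ) = (n : ℝ) - 1 := by
      push_cast [Nat.cast_sub (by omega : (1:ℕ) ≤ n)]; ring
    -- every edge contributes exactly C
    have hval : ∀ u v : V, T.Adj u v →
        Real.sqrt ((T.degree u : ℝ)^2 + (T.degree v : ℝ)^2) = C := by
      intro u v huv
      rcases (hstar u v).1 huv with ⟨hne, h | h⟩
      · have hvc : v ≠ c := by rw [← h]; exact Ne.symm hne
        rw [h, hdegc, hdegp v hvc, hcast, hC]
        norm_num
      · have huc : u ≠ c := by rw [← h]; exact hne
        rw [h, hdegp u huc, hdegc, hcast, hC, add_comm]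
        norm_num
    have : (∑ u : V, ∑ v : V,
        (if T.Adj u v then Real.sqrt ((T.degree u : ℝ)^2 + (T.degree v : ℝ)^2) else 0))
        = 2 * ((n : ℝ) - 1) * C := by
      rw [← hrhs]
      refine Finset.sum_congr rfl fun u _ => Finset.sum_congr rfl fun v _ => ?_
      by_cases h : T.Adj u v
      · simp [h, hval u v h]
      · simp [h]
    rw [somborIndex, this]
    ring
end

section
/- The Sombor index of H(n,t) equals (n − 2t − 1)·√((n−1)² + 1) + 2t·√((n−1)² + 4) + 2√2·t. -/
attribute [local instance] Classical.propDecidable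

/-!
Vertex `0` of `H(n,t)` has degree `n - 1`, the `2t` vertices of the triangles have degree `2` and
the remaining `n - 2t - 1` vertices are pendant. Summing `√(d(u)² + d(v)²)` over the neighbours `v`
of each vertex `u`, the centre contributes `2t √((n-1)² + 4) + (n-2t-1) √((n-1)² + 1)`, each
triangle vertex `√((n-1)² + 4) + √8` and each pendant vertex `√((n-1)² + 1)`; every edge is counted
twice, so `SO(H(n,t))` is half the total.
-/

noncomputable def somborVertexSum {V : Type*} [Fintype V] (G : SimpleGraph V) (u : V) : ℝ :=
  ∑ v ∈ G.neighborFinset u, Real.sqrt ((G.degree u : ℝ)^2 + (G.degree v : ℝ)^2)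

theorem somborIndex_eq_sum_somborVertexSum {V : Type*} [Fintype V] (G : SimpleGraph V) :
    somborIndex G = (∑ u, somborVertexSum G u) / 2 := by
  simp only [somborIndex, somborVertexSum, SimpleGraph.neighborFinset_eq_filter,
    Finset.sum_filter]

theorem Fin.sum_eq_add_nsmul_add_nsmul {M : Type*} [AddCommMonoid M] {n m : ℕ} (hm : m < n)
    {f : Fin n → M} {a b : M} (c : Fin n) (hc : c.val = 0)
    (ha : ∀ v : Fin n, 1 ≤ v.val → v.val ≤ m → f v = a) (hb : ∀ v : Fin n, m < v.val → f v = b) :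
    ∑ v, f v = f c + m • a + (n - m - 1) • b := by
  obtain ⟨r, rfl⟩ : ∃ r, n = m + r + 1 := ⟨n - m - 1, by omega⟩
  obtain rfl : c = 0 := Fin.ext hc
  rw [Fin.sum_univ_succ, Fin.sum_univ_add]
  have hlow : ∀ i : Fin m, f (Fin.castAdd r i).succ = a := fun i => ha _ (by simp) (by simp)
  have hhigh : ∀ i : Fin r, f (Fin.natAdd m i).succ = b := fun i => hb _ (by simp)
  simp only [hlow, hhigh, Finset.sum_const, Finset.card_univ, Fintype.card_fin, add_assoc]
  congr 3
  omega

section Hgraph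

variable {n t : ℕ} {u : Fin n}

theorem hgraph_adj_iff {v : Fin n} :
    (Hgraph n t).Adj u v ↔ u ≠ v ∧ (u.val = 0 ∨ v.val = 0 ∨
      ∃ k < t, u.val = 2 * k + 1 ∧ v.val = 2 * k + 2 ∨ v.val = 2 * k + 1 ∧ u.val = 2 * k + 2) := by
  simp only [Hgraph, SimpleGraph.fromRel_adj]
  refine and_congr_right fun _ => ?_
  constructor
  · rintro ((h0 | ⟨k, hk, h⟩) | (h0 | ⟨k, hk, h⟩))
    exacts [.inl h0, .inr (.inr ⟨k, hk, .inl h⟩), .inr (.inl h0), .inr (.inr ⟨k, hk, .inr h⟩)]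
  · rintro (h0 | h0 | ⟨k, hk, h | h⟩)
    exacts [.inl (.inl h0), .inr (.inl h0), .inl (.inr ⟨k, hk, h⟩), .inr (.inr ⟨k, hk, h⟩)]

theorem hgraph_neighborFinset_center (hu : u.val = 0) :
    (Hgraph n t).neighborFinset u = Finset.univ.erase u := by
  ext v
  simp only [SimpleGraph.mem_neighborFinset, hgraph_adj_iff, Finset.mem_erase, Finset.mem_univ]
  grind

theorem hgraph_neighborFinset_of_le (h : 2 * t < n) (hu₁ : 1 ≤ u.val) (hu₂ : u.val ≤ 2 * t) :
    ∃ w : Fin n, 1 ≤ w.val ∧ w.val ≤ 2 * t ∧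
      (Hgraph n t).neighborFinset u = {⟨0, u.pos⟩, w} := by
  obtain ⟨k, hk, hku⟩ : ∃ k < t, u.val = 2 * k + 1 ∨ u.val = 2 * k + 2 :=
    ⟨(u.val - 1) / 2, by omega, by omega⟩
  -- the partner of `u` in the pair `{2k+1, 2k+2}`
  have hw : 4 * k + 3 - u.val < n := by omega
  refine ⟨⟨4 * k + 3 - u.val, hw⟩, by simp; omega, by simp; omega, ?_⟩
  ext v
  simp only [SimpleGraph.mem_neighborFinset, hgraph_adj_iff, Finset.mem_insert,
    Finset.mem_singleton, Fin.ext_iff, ne_eq]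
  constructor
  · rintro ⟨-, h0 | h0 | ⟨l, hl, h⟩⟩ <;> omega
  · rintro (hv | hv) <;> refine ⟨by omega, ?_⟩
    · omega
    · exact Or.inr (Or.inr ⟨k, hk, by omega⟩)

theorem hgraph_neighborFinset_of_lt (hu : 2 * t < u.val) :
    (Hgraph n t).neighborFinset u = {⟨0, u.pos⟩} := by
  ext v
  simp only [SimpleGraph.mem_neighborFinset, hgraph_adj_iff, Finset.mem_singleton, Fin.ext_iff,
    ne_eq]
  constructor
  · rintro ⟨-, h0 | h0 | ⟨l, hl, h⟩⟩ <;> omega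
  · intro hv
    exact ⟨by omega, Or.inr (Or.inl hv)⟩

theorem hgraph_degree_center (hu : u.val = 0) : ((Hgraph n t).degree u : ℝ) = n - 1 := by
  rw [← SimpleGraph.card_neighborFinset_eq_degree, hgraph_neighborFinset_center hu,
    Finset.card_erase_of_mem (Finset.mem_univ u), Finset.card_univ, Fintype.card_fin,
    Nat.cast_pred u.pos]

theorem hgraph_degree_of_le (h : 2 * t < n) (hu₁ : 1 ≤ u.val) (hu₂ : u.val ≤ 2 * t) :
    ((Hgraph n t).degree u : ℝ) = 2 := by
  obtain ⟨w, hw, -, hN⟩ := hgraph_neighborFinset_of_le h hu₁ hu₂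
  rw [← SimpleGraph.card_neighborFinset_eq_degree, hN,
    Finset.card_pair (Fin.ne_of_val_ne (by simp; omega))]
  norm_num

theorem hgraph_degree_of_lt (hu : 2 * t < u.val) : ((Hgraph n t).degree u : ℝ) = 1 := by
  rw [← SimpleGraph.card_neighborFinset_eq_degree, hgraph_neighborFinset_of_lt hu,
    Finset.card_singleton, Nat.cast_one]

theorem somborVertexSum_hgraph_of_le (h : 2 * t < n) (hu₁ : 1 ≤ u.val) (hu₂ : u.val ≤ 2 * t) :
    somborVertexSum (Hgraph n t) u =
      Real.sqrt (((n : ℝ) - 1)^2 + 4) + 2 * Real.sqrt 2 := by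
  obtain ⟨w, hw₁, hw₂, hN⟩ := hgraph_neighborFinset_of_le h hu₁ hu₂
  have hsqrt8 : Real.sqrt (2^2 + 2^2) = 2 * Real.sqrt 2 := by
    rw [show (2 : ℝ)^2 + 2^2 = 2^2 * 2 by norm_num, Real.sqrt_mul (by positivity),
      Real.sqrt_sq zero_le_two]
  rw [somborVertexSum, hN, Finset.sum_pair (Fin.ne_of_val_ne (by simp; omega)),
    hgraph_degree_of_le h hu₁ hu₂,
    hgraph_degree_center rfl, hgraph_degree_of_le h hw₁ hw₂, hsqrt8, add_comm (2^2 : ℝ)]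
  norm_num

theorem somborVertexSum_hgraph_of_lt (hu : 2 * t < u.val) :
    somborVertexSum (Hgraph n t) u =
      Real.sqrt (((n : ℝ) - 1)^2 + 1) := by
  rw [somborVertexSum, hgraph_neighborFinset_of_lt hu, Finset.sum_singleton, hgraph_degree_of_lt hu,
    hgraph_degree_center rfl, add_comm]
  norm_num

theorem somborVertexSum_hgraph_center (h : 2 * t < n) (hu : u.val = 0) :
    somborVertexSum (Hgraph n t) u =
      (2 * t : ℕ) • Real.sqrt (((n : ℝ) - 1)^2 + 4) +
        (n - 2 * t - 1) • Real.sqrt (((n : ℝ) - 1)^2 + 1) := by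
  rw [somborVertexSum, hgraph_neighborFinset_center hu, Finset.sum_erase_eq_sub (Finset.mem_univ u),
    Fin.sum_eq_add_nsmul_add_nsmul h u hu (a := Real.sqrt (((n : ℝ) - 1)^2 + 4))
      (b := Real.sqrt (((n : ℝ) - 1)^2 + 1))]
  · ring
  · intro v hv₁ hv₂
    rw [hgraph_degree_center hu, hgraph_degree_of_le h hv₁ hv₂]
    norm_num
  · intro v hv
    rw [hgraph_degree_center hu, hgraph_degree_of_lt hv]
    norm_num

end Hgraph

theorem sombor_Hgraph (n t : ℕ) (h : 2 * t + 1 ≤ n) :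
    somborIndex (Hgraph n t) = ((n : ℝ) - 2 * t - 1) * Real.sqrt (((n : ℝ) - 1)^2 + 1) +
      2 * t * Real.sqrt (((n : ℝ) - 1)^2 + 4) + 2 * Real.sqrt 2 * t := by
  have hn : 2 * t < n := h
  rw [somborIndex_eq_sum_somborVertexSum,
    Fin.sum_eq_add_nsmul_add_nsmul hn ⟨0, by omega⟩ rfl
      (fun _ hu₁ hu₂ => somborVertexSum_hgraph_of_le hn hu₁ hu₂)
      (fun _ hu => somborVertexSum_hgraph_of_lt hu),
    somborVertexSum_hgraph_center hn rfl]
  simp only [nsmul_eq_mul]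
  rw [Nat.cast_sub (by omega), Nat.cast_sub (by omega)]
  push_cast
  ring
end

section
/- Let G be a cactus on 2β vertices (β ≥ 2) with t cycles, a perfect matching, and minimum degree δ(G) ≥ 2. Then SO(G) < (β+t−1)·√((β+t)² + 4) + √((β+t)² + 1) + √5·(β−t−1) + 2√2·t (strict inequality). -/
attribute [local instance] Classical.propDecidable

private lemma sqrt_lb {x a : ℝ} (hx : 0 ≤ x) (h : x^2 ≤ a) : x ≤ Real.sqrt a := by
  have := Real.sqrt_le_sqrt h
  rwa [Real.sqrt_sq hx] at this

private lemma sqrt_ub {x a : ℝ} (hx : 0 ≤ x) (h : a ≤ x^2) : Real.sqrt a ≤ x := by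
  have := Real.sqrt_le_sqrt h
  rwa [Real.sqrt_sq hx] at this

private lemma sqrt2_lb : (1.414213:ℝ) ≤ Real.sqrt 2 := sqrt_lb (by norm_num) (by norm_num)
private lemma sqrt2_ub : Real.sqrt 2 ≤ 1.414214 := sqrt_ub (by norm_num) (by norm_num)
private lemma sqrt5_lb : (2.236067:ℝ) ≤ Real.sqrt 5 := sqrt_lb (by norm_num) (by norm_num)
private lemma sqrt5_ub : Real.sqrt 5 ≤ 2.236068 := sqrt_ub (by norm_num) (by norm_num)

private lemma sqrt_pair_le {a b : ℝ} (ha : 2 ≤ a) (hb : 2 ≤ b) :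
    Real.sqrt (a^2 + b^2) ≤ a + b - (4 - 2*Real.sqrt 2) := by
  have h2 : Real.sqrt 2 ^ 2 = 2 := Real.sq_sqrt (by norm_num)
  have h1 : (1:ℝ) ≤ Real.sqrt 2 := by nlinarith [sqrt2_lb]
  have hrhs : (0:ℝ) ≤ a + b - (4 - 2*Real.sqrt 2) := by nlinarith
  apply sqrt_ub hrhs
  nlinarith [mul_nonneg (by linarith : (0:ℝ) ≤ a - 2) (by linarith : (0:ℝ) ≤ b - 2),
    mul_nonneg (by linarith : (0:ℝ) ≤ Real.sqrt 2 - 1) (by linarith : (0:ℝ) ≤ a + b - 4)]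

private lemma sombor_le_aux {V : Type*} [Fintype V] (G : SimpleGraph V)
    (hδ : ∀ v, 2 ≤ G.degree v) :
    somborIndex G ≤ (∑ v : V, (G.degree v : ℝ)^2)
      - (4 - 2*Real.sqrt 2) * G.edgeFinset.card := by
  classical
  have hconst : ∀ (u : V) (c : ℝ),
      (∑ v : V, if G.Adj u v then c else 0) = (G.degree u : ℝ) * c := by
    intro u c
    have hcard : (Finset.univ.filter (fun v => G.Adj u v)).card = G.degree u := by
      rw [← SimpleGraph.neighborFinset_eq_filter, SimpleGraph.card_neighborFinset_eq_degree]
    rw [Finset.sum_ite, Finset.sum_const_zero, add_zero, Finset.sum_const, hcard, nsmul_eq_mul]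
  have key : ∀ u v : V,
      (if G.Adj u v then Real.sqrt ((G.degree u:ℝ)^2 + (G.degree v:ℝ)^2) else 0) ≤
      (if G.Adj u v then ((G.degree u:ℝ) + G.degree v - (4 - 2*Real.sqrt 2)) else 0) := by
    intro u v
    split
    · exact sqrt_pair_le (by exact_mod_cast hδ u) (by exact_mod_cast hδ v)
    · exact le_refl 0
  have hsum : (∑ u : V, ∑ v : V,
        if G.Adj u v then Real.sqrt ((G.degree u:ℝ)^2 + (G.degree v:ℝ)^2) else 0) ≤
      (∑ u : V, ∑ v : V,
        if G.Adj u v then ((G.degree u:ℝ) + G.degree v - (4 - 2*Real.sqrt 2)) else 0) :=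
    Finset.sum_le_sum fun u _ => Finset.sum_le_sum fun v _ => key u v
  have hsplit : ∀ u v : V,
      (if G.Adj u v then ((G.degree u:ℝ) + G.degree v - (4 - 2*Real.sqrt 2)) else 0) =
      (if G.Adj u v then (G.degree u:ℝ) else 0) + (if G.Adj u v then (G.degree v:ℝ) else 0)
        - (4 - 2*Real.sqrt 2) * (if G.Adj u v then (1:ℝ) else 0) := by
    intro u v; split <;> ring
  have hB : (∑ u : V, ∑ v : V,
        if G.Adj u v then ((G.degree u:ℝ) + G.degree v - (4 - 2*Real.sqrt 2)) else 0)
      = 2*(∑ v : V, (G.degree v:ℝ)^2) - (4 - 2*Real.sqrt 2) * (2 * G.edgeFinset.card) := by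
    have h1 : (∑ u : V, ∑ v : V, if G.Adj u v then (G.degree u:ℝ) else 0)
        = ∑ u : V, (G.degree u:ℝ)^2 := by
      refine Finset.sum_congr rfl fun u _ => ?_
      rw [hconst u]; ring
    have h2 : (∑ u : V, ∑ v : V, if G.Adj u v then (G.degree v:ℝ) else 0)
        = ∑ v : V, (G.degree v:ℝ)^2 := by
      rw [Finset.sum_comm]
      refine Finset.sum_congr rfl fun v _ => ?_
      have he : ∀ u : V, (if G.Adj u v then (G.degree v:ℝ) else 0)
          = (if G.Adj v u then (G.degree v:ℝ) else 0) := by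
        intro u
        by_cases h : G.Adj u v
        · rw [if_pos h, if_pos (h.symm)]
        · rw [if_neg h, if_neg (fun hh => h hh.symm)]
      calc (∑ u : V, if G.Adj u v then (G.degree v:ℝ) else 0)
          = ∑ u : V, (if G.Adj v u then (G.degree v:ℝ) else 0) :=
            Finset.sum_congr rfl fun u _ => he u
        _ = (G.degree v:ℝ) * (G.degree v:ℝ) := hconst v _
        _ = (G.degree v:ℝ)^2 := by ring
    have h3 : (∑ u : V, ∑ v : V, if G.Adj u v then (1:ℝ) else 0)
        = 2 * (G.edgeFinset.card : ℝ) := by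
      have : ∀ u : V, (∑ v : V, if G.Adj u v then (1:ℝ) else 0) = (G.degree u : ℝ) := by
        intro u; rw [hconst u]; ring
      rw [Finset.sum_congr rfl fun u _ => this u, ← Nat.cast_sum]
      rw [G.sum_degrees_eq_twice_card_edges]
      push_cast; ring
    calc (∑ u : V, ∑ v : V,
          if G.Adj u v then ((G.degree u:ℝ) + G.degree v - (4 - 2*Real.sqrt 2)) else 0)
        = (∑ u : V, ∑ v : V, ((if G.Adj u v then (G.degree u:ℝ) else 0)
            + (if G.Adj u v then (G.degree v:ℝ) else 0)
            - (4 - 2*Real.sqrt 2) * (if G.Adj u v then (1:ℝ) else 0))) := by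
          refine Finset.sum_congr rfl fun u _ => Finset.sum_congr rfl fun v _ => hsplit u v
      _ = 2*(∑ v : V, (G.degree v:ℝ)^2) - (4 - 2*Real.sqrt 2) * (2 * G.edgeFinset.card) := by
          simp_rw [Finset.sum_sub_distrib, Finset.sum_add_distrib, ← Finset.mul_sum]
          rw [h1, h2, h3]; ring
  rw [somborIndex]
  rw [hB] at hsum
  linarith


set_option maxHeartbeats 2000000 in
theorem cactus_pm_minDeg_sombor_lt {V : Type*} [Fintype V] (G : SimpleGraph V) (β t : ℕ)
    (hβ : 2 ≤ β) (hcard : Fintype.card V = 2 * β) (hcactus : IsCactus G)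
    (hcycles : G.edgeFinset.card = 2 * β - 1 + t)
    (hpm : ∃ M : G.Subgraph, M.IsPerfectMatching)
    (hδ : ∀ v : V, 2 ≤ G.degree v) :
    somborIndex G < ((β : ℝ) + t - 1) * Real.sqrt (((β : ℝ) + t)^2 + 4) +
      Real.sqrt (((β : ℝ) + t)^2 + 1) + Real.sqrt 5 * ((β : ℝ) - t - 1) +
      2 * Real.sqrt 2 * t := by
  classical
  -- handshake
  have hhand : ∑ v : V, G.degree v = 2 * G.edgeFinset.card :=
    G.sum_degrees_eq_twice_card_edges
  have hcardsum : ∑ v : V, (2:ℕ) = 2 * (2*β) := by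
    rw [Finset.sum_const, Finset.card_univ, hcard]; ring
  have ht1 : 1 ≤ t := by
    have h1 : ∑ v : V, (2:ℕ) ≤ ∑ v : V, G.degree v := Finset.sum_le_sum fun v _ => hδ v
    rw [hcardsum, hhand, hcycles] at h1
    omega
  obtain ⟨b, rfl⟩ : ∃ b, β = b + 2 := ⟨β - 2, by omega⟩
  obtain ⟨s, rfl⟩ : ∃ s, t = s + 1 := ⟨t - 1, by omega⟩
  have hmnat : G.edgeFinset.card = 2*b + s + 4 := by rw [hcycles]; omega
  have hm : (G.edgeFinset.card : ℝ) = 2*(b:ℝ) + s + 4 := by rw [hmnat]; push_cast; ring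
  have hDR : ∑ v : V, (G.degree v : ℝ) = 4*(b:ℝ) + 2*s + 8 := by
    rw [← Nat.cast_sum, hhand, hmnat]; push_cast; ring
  have hNe : Nonempty V := by
    rw [← Fintype.card_pos_iff, hcard]; omega
  have hub : ∀ v : V, (G.degree v : ℝ) ≤ 2*(b:ℝ) + 3 := by
    intro v
    have := G.degree_lt_card_verts v
    rw [hcard] at this
    have : G.degree v ≤ 2*b + 3 := by omega
    exact_mod_cast this
  have hlb : ∀ v : V, (2:ℝ) ≤ (G.degree v : ℝ) := fun v => by exact_mod_cast hδ v
  have hxsum : ∑ v : V, ((G.degree v : ℝ) - 2) = 2*(s:ℝ) := by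
    rw [Finset.sum_sub_distrib, hDR, Finset.sum_const, Finset.card_univ, hcard]
    push_cast; ring
  have hxnn : ∀ v : V, (0:ℝ) ≤ (G.degree v : ℝ) - 2 := fun v => by linarith [hlb v]
  have hxsq1 : ∑ v : V, ((G.degree v : ℝ) - 2)^2 ≤ (2*(s:ℝ))^2 := by
    calc ∑ v : V, ((G.degree v : ℝ) - 2)^2
        ≤ ∑ v : V, ((G.degree v : ℝ) - 2) * (2*(s:ℝ)) := by
          refine Finset.sum_le_sum fun v _ => ?_
          have hle : (G.degree v : ℝ) - 2 ≤ 2*(s:ℝ) := by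
            rw [← hxsum]
            exact Finset.single_le_sum (fun i _ => hxnn i) (Finset.mem_univ v)
          rw [pow_two]
          exact mul_le_mul_of_nonneg_left hle (hxnn v)
      _ = (2*(s:ℝ))^2 := by rw [← Finset.sum_mul, hxsum]; ring
  have hxsq2 : ∑ v : V, ((G.degree v : ℝ) - 2)^2 ≤ (2*(b:ℝ)+1) * (2*(s:ℝ)) := by
    calc ∑ v : V, ((G.degree v : ℝ) - 2)^2
        ≤ ∑ v : V, (2*(b:ℝ)+1) * ((G.degree v : ℝ) - 2) := by
          refine Finset.sum_le_sum fun v _ => ?_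
          have hle : (G.degree v : ℝ) - 2 ≤ 2*(b:ℝ)+1 := by linarith [hub v]
          rw [pow_two]
          exact mul_le_mul_of_nonneg_right hle (hxnn v)
      _ = (2*(b:ℝ)+1) * (2*(s:ℝ)) := by rw [← Finset.mul_sum, hxsum]
  have hQsplit : ∑ v : V, (G.degree v : ℝ)^2
      = (∑ v : V, ((G.degree v : ℝ) - 2)^2) + 4*(∑ v : V, ((G.degree v : ℝ) - 2))
        + (8*(b:ℝ) + 16) := by
    calc ∑ v : V, (G.degree v : ℝ)^2
        = ∑ v : V, (((G.degree v : ℝ) - 2)^2 + 4*((G.degree v : ℝ) - 2) + 4) :=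
          Finset.sum_congr rfl (fun v _ => by ring)
      _ = (∑ v : V, ((G.degree v : ℝ) - 2)^2) + (∑ v : V, 4*((G.degree v : ℝ) - 2))
            + (∑ _v : V, (4:ℝ)) := by
          rw [Finset.sum_add_distrib, Finset.sum_add_distrib]
      _ = (∑ v : V, ((G.degree v : ℝ) - 2)^2) + 4*(∑ v : V, ((G.degree v : ℝ) - 2))
            + (8*(b:ℝ) + 16) := by
          rw [← Finset.mul_sum, Finset.sum_const, Finset.card_univ, hcard, nsmul_eq_mul]
          push_cast; ring
  have hQ1 : ∑ v : V, (G.degree v : ℝ)^2 ≤ 4*(s:ℝ)^2 + 8*(s:ℝ) + 8*(b:ℝ) + 16 := by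
    rw [hQsplit, hxsum]; nlinarith [hxsq1]
  have hQ2 : ∑ v : V, (G.degree v : ℝ)^2
      ≤ (2*(b:ℝ)+1)*(2*(s:ℝ)) + 8*(s:ℝ) + 8*(b:ℝ) + 16 := by
    rw [hQsplit, hxsum]; nlinarith [hxsq2]
  have hSO : somborIndex G ≤ (∑ v : V, (G.degree v : ℝ)^2)
      - (4 - 2*Real.sqrt 2) * G.edgeFinset.card := sombor_le_aux G hδ
  -- cast equalities
  have hβR : ((b + 2 : ℕ) : ℝ) = (b:ℝ) + 2 := by push_cast; ring
  have htR : ((s + 1 : ℕ) : ℝ) = (s:ℝ) + 1 := by push_cast; ring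
  -- sqrt lower bounds for the RHS
  have hgen0 : (0:ℝ) ≤ ((b+2:ℕ):ℝ) + ((s+1:ℕ):ℝ) := by rw [hβR, htR]; positivity
  have hA : ((b+2:ℕ):ℝ) + ((s+1:ℕ):ℝ)
      ≤ Real.sqrt ((((b+2:ℕ):ℝ) + ((s+1:ℕ):ℝ))^2 + 4) := sqrt_lb hgen0 (by nlinarith)
  have hB : ((b+2:ℕ):ℝ) + ((s+1:ℕ):ℝ)
      ≤ Real.sqrt ((((b+2:ℕ):ℝ) + ((s+1:ℕ):ℝ))^2 + 1) := sqrt_lb hgen0 (by nlinarith)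
  have hAmul : (((b+2:ℕ):ℝ) + ((s+1:ℕ):ℝ) - 1) * (((b+2:ℕ):ℝ) + ((s+1:ℕ):ℝ))
      ≤ (((b+2:ℕ):ℝ) + ((s+1:ℕ):ℝ) - 1) * Real.sqrt ((((b+2:ℕ):ℝ) + ((s+1:ℕ):ℝ))^2 + 4) := by
    apply mul_le_mul_of_nonneg_left hA
    rw [hβR, htR]
    have := Nat.cast_nonneg (α := ℝ) b
    have := Nat.cast_nonneg (α := ℝ) s
    linarith
  have hbnn : (0:ℝ) ≤ (b:ℝ) := Nat.cast_nonneg b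
  have hsnn : (0:ℝ) ≤ (s:ℝ) := Nat.cast_nonneg s
  have h2l := sqrt2_lb
  have h2u := sqrt2_ub
  have h5l := sqrt5_lb
  have h5u := sqrt5_ub
  -- case analysis
  have hcases : s ≤ b ∨ (s = b + 1) ∨ b + 2 ≤ s := by omega
  rcases hcases with hsb | hsb | hsb
  · -- t ≤ β - 1
    have hbs : (0:ℝ) ≤ (b:ℝ) - s := by
      have : (s:ℝ) ≤ (b:ℝ) := by exact_mod_cast hsb
      linarith
    refine lt_of_le_of_lt hSO ?_
    rw [hm]
    nlinarith [hβR, htR, hAmul, hB, hQ1, mul_nonneg hsnn hbs, mul_nonneg hbnn hbs,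
      mul_nonneg (by linarith : (0:ℝ) ≤ Real.sqrt 5 - 2) hbs,
      mul_nonneg (by linarith : (0:ℝ) ≤ Real.sqrt 2 - 1) hsnn]
  · -- t = β
    subst hsb
    rcases Nat.lt_or_ge b 3 with hb3 | hb3
    · -- b = 0, 1, 2 : numeric cases
      interval_cases b
      · -- β = 2, t = 2
        have h20 : (4.4721:ℝ) ≤ Real.sqrt ((((0+2:ℕ):ℝ) + ((0+1+1:ℕ):ℝ))^2 + 4) := by
          apply sqrt_lb (by norm_num)
          norm_num
        have h17 : (4.1231:ℝ) ≤ Real.sqrt ((((0+2:ℕ):ℝ) + ((0+1+1:ℕ):ℝ))^2 + 1) := by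
          apply sqrt_lb (by norm_num)
          norm_num
        refine lt_of_le_of_lt hSO ?_
        rw [hm]
        norm_num at hQ2 hm h20 h17 ⊢
        nlinarith [hQ2, h20, h17, h2l, h2u, h5l, h5u]
      · -- β = 3, t = 3
        have h40 : (6.3245:ℝ) ≤ Real.sqrt ((((1+2:ℕ):ℝ) + ((1+1+1:ℕ):ℝ))^2 + 4) := by
          apply sqrt_lb (by norm_num)
          norm_num
        have h37 : (6.0827:ℝ) ≤ Real.sqrt ((((1+2:ℕ):ℝ) + ((1+1+1:ℕ):ℝ))^2 + 1) := by
          apply sqrt_lb (by norm_num)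
          norm_num
        refine lt_of_le_of_lt hSO ?_
        rw [hm]
        norm_num at hQ2 hm h40 h37 ⊢
        nlinarith [hQ2, h40, h37, h2l, h2u, h5l, h5u]
      · -- β = 4, t = 4
        have h68 : (8.2462:ℝ) ≤ Real.sqrt ((((2+2:ℕ):ℝ) + ((2+1+1:ℕ):ℝ))^2 + 4) := by
          apply sqrt_lb (by norm_num)
          norm_num
        have h65 : (8.0622:ℝ) ≤ Real.sqrt ((((2+2:ℕ):ℝ) + ((2+1+1:ℕ):ℝ))^2 + 1) := by
          apply sqrt_lb (by norm_num)
          norm_num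
        refine lt_of_le_of_lt hSO ?_
        rw [hm]
        norm_num at hQ2 hm h68 h65 ⊢
        nlinarith [hQ2, h68, h65, h2l, h2u, h5l, h5u]
    · -- b ≥ 3
      have hb3R : (3:ℝ) ≤ (b:ℝ) := by exact_mod_cast hb3
      refine lt_of_le_of_lt hSO ?_
      rw [hm]
      nlinarith [hβR, htR, hAmul, hB, hQ2, mul_nonneg (by linarith : (0:ℝ) ≤ Real.sqrt 2 - 1) hbnn]
  · -- t ≥ β + 1
    have hsbR : (b:ℝ) + 2 ≤ (s:ℝ) := by exact_mod_cast hsb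
    refine lt_of_le_of_lt hSO ?_
    rw [hm]
    nlinarith [hβR, htR, hAmul, hB, hQ2, sq_nonneg ((s:ℝ) - b - 2),
      mul_nonneg (by linarith : (0:ℝ) ≤ (s:ℝ) - b - 2) (by linarith : (0:ℝ) ≤ 4 - Real.sqrt 5),
      mul_nonneg (by linarith : (0:ℝ) ≤ Real.sqrt 2 - 1) hbnn]
end
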